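/- arXiv:2102.09034 — 2 statements merged into one kernel-verified Lean document; each statement's English description precedes it below -/
import Mathlib

section
/- For every even integer m = 2k + 4 ≥ 6, the pentagon Δ with vertices (0,0), (m−4,0), (m,1), (m−2,m), (m−3,m−1) has normalized volume m² and exactly m boundary lattice points; consequently vol(Δ) − m² = 0 and ½(vol(Δ) − |∂Δ∩ℤ²| + m − m²) + 1 = 1. -/
/-!
The shoelace sum of the pentagon is identically `m ^ 2` as a polynomial in `m`. On the boundary,
the bottom edge `(m - 4, 0)` carries `m - 4` lattice steps, while the other four edge vectors
`(4, 1)`, `(-2, m - 1)`, `(-1, -1)`, `(3 - m, 1 - m)` are primitive exactly because `m` is even.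
-/

/-- Twice the signed area of the polygon with the given (cyclically ordered) list
of vertices, in absolute value: the normalized volume (shoelace formula). -/
def normVol (l : List (ℤ × ℤ)) : ℤ :=
  |(((l.zip (l.rotate 1)).map fun e => e.1.1 * e.2.2 - e.2.1 * e.1.2).sum)|

/-- The number of lattice points on the boundary of the polygon with the given
(cyclically ordered) list of vertices: the sum over the edges of the gcd of the
coordinate differences of the endpoints. -/
def boundaryPts (l : List (ℤ × ℤ)) : ℤ :=
  ((l.zip (l.rotate 1)).map fun e => (Int.gcd (e.2.1 - e.1.1) (e.2.2 - e.1.2) : ℤ)).sum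

def pentagon (m : ℤ) : List (ℤ × ℤ) :=
  [(0, 0), (m - 4, 0), (m, 1), (m - 2, m), (m - 3, m - 1)]

theorem normVol_pentagon (m : ℤ) : normVol (pentagon m) = m ^ 2 := by
  rw [normVol, ← abs_sq m]
  refine congrArg abs ?_
  simp only [pentagon, List.rotate_cons_succ, List.rotate_zero, List.cons_append,
    List.nil_append, List.zip_cons_cons, List.zip_nil_right, List.map_cons, List.map_nil,
    List.sum_cons, List.sum_nil]
  ring

theorem boundaryPts_pentagon {m : ℤ} (hm : Even m) (h4 : 4 ≤ m) :
    boundaryPts (pentagon m) = m := by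
  have hodd : Odd (1 - m) := odd_one.sub_even hm
  have h2 : Int.gcd 2 (m - 1) = 1 :=
    Int.isCoprime_iff_gcd_eq_one.mp (Int.isCoprime_two_left.mpr (hm.sub_odd odd_one))
  have h3 : Int.gcd (3 - m) (1 - m) = 1 := by
    refine Int.isCoprime_iff_gcd_eq_one.mp ?_
    rw [show 3 - m = 2 + (1 - m) * 1 by ring]
    exact (Int.isCoprime_two_left.mpr hodd).add_mul_left_left 1
  simp [boundaryPts, pentagon, h2, h3, abs_of_nonneg (sub_nonneg.2 h4)]

theorem genus_formula_eq_one {vol bd m : ℤ} (hvol : vol = m ^ 2) (hbd : bd = m) :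
    ((vol : ℚ) - bd + m - m ^ 2) / 2 + 1 = 1 := by
  subst hvol hbd
  push_cast
  ring

/-- For every even m = 2k + 4 ≥ 6 the pentagon with vertices
(0,0), (m−4,0), (m,1), (m−2,m), (m−3,m−1) has normalized volume m² and m
boundary lattice points; consequently vol(Δ) − m² = 0 and the genus formula
evaluates to 1. -/
theorem pentagon_v_vol_boundary (k : ℤ) (hk : 1 ≤ k) (m : ℤ) (hm : m = 2 * k + 4) :
    normVol [((0:ℤ), (0:ℤ)), (m - 4, 0), (m, 1), (m - 2, m), (m - 3, m - 1)] = m ^ 2 ∧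
    boundaryPts [((0:ℤ), (0:ℤ)), (m - 4, 0), (m, 1), (m - 2, m), (m - 3, m - 1)] = m ∧
    normVol [((0:ℤ), (0:ℤ)), (m - 4, 0), (m, 1), (m - 2, m), (m - 3, m - 1)] - m ^ 2 = 0 ∧
    ((normVol [((0:ℤ), (0:ℤ)), (m - 4, 0), (m, 1), (m - 2, m), (m - 3, m - 1)] : ℚ)
      - (boundaryPts [((0:ℤ), (0:ℤ)), (m - 4, 0), (m, 1), (m - 2, m), (m - 3, m - 1)] : ℚ)
      + (m : ℚ) - (m : ℚ) ^ 2) / 2 + 1 = 1 := by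
  rw [← pentagon]
  have hvol : normVol (pentagon m) = m ^ 2 := normVol_pentagon m
  have hbd : boundaryPts (pentagon m) = m := boundaryPts_pentagon ⟨k + 2, by omega⟩ (by omega)
  exact ⟨hvol, hbd, sub_eq_zero.mpr hvol, genus_formula_eq_one hvol hbd⟩
end

section
/- The Laurent polynomial f = (u² v + u v² − 3uv + 1) is irreducible over ℚ and vanishes to order exactly 2 at (u,v) = (1,1), i.e. f(1,1) = 0, ∂f/∂u(1,1) = 0, ∂f/∂v(1,1) = 0, and some second partial derivative of f at (1,1) is nonzero. -/
/-!
Under `ℚ[u,v] ≃ ℚ[v][u]` the polynomial becomes the quadratic `v u² + (v² - 3v) u + 1` in `u`.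
Its constant term is a unit, so a nontrivial factorization would be a product of two linear
factors `(a₁ u + a₀)(b₁ u + b₀)` with unit constant terms `a₀, b₀`. The middle coefficient
`a₁ b₀ + a₀ b₁` then has `v`-degree at most `deg a₁ + deg b₁ = deg v = 1`, whereas `v² - 3v` has
degree 2.
-/

open MvPolynomial

@[simp]
theorem Derivation.map_ofNat {R A M : Type*} [CommSemiring R] [CommSemiring A] [AddCommMonoid M]
    [Algebra R A] [Module A M] [Module R M] (D : Derivation R A M) (n : ℕ) [n.AtLeastTwo] :
    D (ofNat(n) : A) = 0 :=
  D.map_natCast n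

namespace Polynomial

theorem isUnit_of_natDegree_eq_zero_of_isUnit_coeff_zero {S : Type*} [CommSemiring S] {a : S[X]}
    (ha : a.natDegree = 0) (ha₀ : IsUnit (a.coeff 0)) : IsUnit a :=
  eq_C_of_natDegree_eq_zero ha ▸ ha₀.map C

variable {R : Type*} [CommSemiring R] [NoZeroDivisors R]

theorem natDegree_coeff_one_mul_le {a b : R[X][X]} (ha : a.natDegree = 1) (hb : b.natDegree = 1)
    (ha₀ : IsUnit (a.coeff 0)) (hb₀ : IsUnit (b.coeff 0)) :
    ((a * b).coeff 1).natDegree ≤ ((a * b).coeff 2).natDegree := by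
  have ha₁ : a.coeff 1 ≠ 0 := ha ▸ leadingCoeff_ne_zero.mpr (ne_zero_of_natDegree_gt (ha ▸ one_pos))
  have hb₁ : b.coeff 1 ≠ 0 := hb ▸ leadingCoeff_ne_zero.mpr (ne_zero_of_natDegree_gt (hb ▸ one_pos))
  have hlead : (a * b).coeff 2 = a.coeff 1 * b.coeff 1 := by
    simpa [ha, hb, leadingCoeff] using coeff_mul_degree_add_degree a b
  rw [mul_coeff_one, hlead, natDegree_mul ha₁ hb₁]
  refine (natDegree_add_le _ _).trans (max_le ?_ ?_)
  · have := natDegree_eq_zero_of_isUnit ha₀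
    grw [natDegree_mul_le]
    omega
  · have := natDegree_eq_zero_of_isUnit hb₀
    grw [natDegree_mul_le]
    omega

theorem irreducible_of_natDegree_coeff_two_lt {p : R[X][X]} (hp : p.natDegree = 2)
    (hp₀ : IsUnit (p.coeff 0)) (hlt : (p.coeff 2).natDegree < (p.coeff 1).natDegree) :
    Irreducible p := by
  refine ⟨fun hu => by simp [natDegree_eq_zero_of_isUnit hu] at hp, fun a b hab => ?_⟩
  subst hab
  have hab₀ : a * b ≠ 0 := ne_zero_of_natDegree_gt (hp ▸ two_pos)
  rw [natDegree_mul (left_ne_zero_of_mul hab₀) (right_ne_zero_of_mul hab₀)] at hp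
  rw [mul_coeff_zero] at hp₀
  have ha₀ := isUnit_of_mul_isUnit_left hp₀
  have hb₀ := isUnit_of_mul_isUnit_right hp₀
  by_cases ha : a.natDegree = 0
  · exact .inl (isUnit_of_natDegree_eq_zero_of_isUnit_coeff_zero ha ha₀)
  by_cases hb : b.natDegree = 0
  · exact .inr (isUnit_of_natDegree_eq_zero_of_isUnit_coeff_zero hb hb₀)
  have := natDegree_coeff_one_mul_le (a := a) (b := b) (by omega) (by omega) ha₀ hb₀
  omega

theorem irreducible_C_mul_X_sq_add_C_mul_X_add_one {b c : R[X]} (hc : c ≠ 0)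
    (hcb : c.natDegree < b.natDegree) : Irreducible (C c * X ^ 2 + C b * X + 1 : R[X][X]) := by
  refine irreducible_of_natDegree_coeff_two_lt ?_ (by simp) (by simpa [coeff_one] using hcb)
  compute_degree!

end Polynomial

namespace MvPolynomial

variable (R : Type*) [CommSemiring R]

noncomputable def finTwoAlgEquiv : MvPolynomial (Fin 2) R ≃ₐ[R] Polynomial (Polynomial R) :=
  (finSuccEquiv R 1).trans (Polynomial.mapAlgEquiv (uniqueAlgEquiv R (Fin 1)))

@[simp]
theorem finTwoAlgEquiv_X_zero : finTwoAlgEquiv R (X 0) = Polynomial.X := by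
  rw [finTwoAlgEquiv, AlgEquiv.trans_apply, finSuccEquiv_X_zero, Polynomial.coe_mapAlgEquiv,
    Polynomial.map_X]

@[simp]
theorem finTwoAlgEquiv_X_one : finTwoAlgEquiv R (X 1) = Polynomial.C Polynomial.X := by
  rw [finTwoAlgEquiv, AlgEquiv.trans_apply, ← Fin.succ_zero_eq_one, finSuccEquiv_X_succ,
    Polynomial.coe_mapAlgEquiv, Polynomial.map_C]
  simp

end MvPolynomial

/-- The polynomial `u²v + uv² − 3uv + 1` is irreducible over ℚ and vanishes to
order exactly 2 at `(1,1)`. -/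
theorem uv_polynomial_irreducible_mult_two :
    let f : MvPolynomial (Fin 2) ℚ :=
      X 0 ^ 2 * X 1 + X 0 * X 1 ^ 2 - 3 * (X 0 * X 1) + 1
    Irreducible f ∧
    eval (fun _ => (1 : ℚ)) f = 0 ∧
    eval (fun _ => (1 : ℚ)) (pderiv 0 f) = 0 ∧
    eval (fun _ => (1 : ℚ)) (pderiv 1 f) = 0 ∧
    ∃ i j : Fin 2, eval (fun _ => (1 : ℚ)) (pderiv i (pderiv j f)) ≠ 0 := by
  intro f
  refine ⟨?_, ?_, ?_, ?_, 0, 0, ?_⟩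
  · have hf : finTwoAlgEquiv ℚ f = Polynomial.C Polynomial.X * Polynomial.X ^ 2
        + Polynomial.C (Polynomial.X ^ 2 - 3 * Polynomial.X) * Polynomial.X + 1 := by
      simp [f, map_ofNat]
      ring
    have hb : (Polynomial.X ^ 2 - 3 * Polynomial.X : Polynomial ℚ).natDegree = 2 := by
      compute_degree!
    rw [← MulEquiv.irreducible_iff (finTwoAlgEquiv ℚ), hf]
    exact Polynomial.irreducible_C_mul_X_sq_add_C_mul_X_add_one Polynomial.X_ne_zero
      (by rw [Polynomial.natDegree_X, hb]; norm_num)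
  all_goals norm_num [f, pderiv_X]
end
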